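/- arXiv:0807.4126 — 5 statements merged into one kernel-verified Lean document; each statement's English description precedes it below -/
import Mathlib

section
/- Let n ≥ 2, let I ⊆ ℝ be an interval, and let ω = (ω₁,…,ωₙ) be a Chebyshev system on I such that (ω₁,…,ω_{n−1}) is also a Chebyshev system on I. Then for every function f : I → ℝ and any n+1 pairwise distinct points x₁,…,x_{n+1} ∈ I one has [x₂,…,x_{n+1};f]_ω − [x₁,…,xₙ;f]_ω = Dₙ(x₁,…,x_{n+1};f) · V_{n−1}(x₂,…,xₙ) / ( Vₙ(x₂,…,x_{n+1}) · Vₙ(x₁,…,xₙ) ). -/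
/-- `chebV ω x` is the determinant `Vₙ(x₁,…,xₙ)` with `(i,j)` entry `ωᵢ(xⱼ)`. -/
noncomputable def chebV {n : ℕ} (ω : Fin n → ℝ → ℝ) (x : Fin n → ℝ) : ℝ :=
  Matrix.det (Matrix.of fun i j => ω i (x j))

/-- `chebD ω f x` is the determinant `Dₙ(x₁,…,x_{n+1};f)` whose first `n` rows are
`ωᵢ(x₁),…,ωᵢ(x_{n+1})` and whose last row is `f(x₁),…,f(x_{n+1})`. -/
noncomputable def chebD {n : ℕ} (ω : Fin n → ℝ → ℝ) (f : ℝ → ℝ) (x : Fin (n + 1) → ℝ) : ℝ :=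
  Matrix.det (Matrix.of (Fin.snoc (fun i j => ω i (x j)) (fun j => f (x j)) :
    Fin (n + 1) → Fin (n + 1) → ℝ))

/-- `ω = (ω₁,…,ωₙ)` is a Chebyshev system on `I`: the `ωᵢ` are continuous on `I` and
`Vₙ(x₁,…,xₙ) ≠ 0` whenever `x₁ < ⋯ < xₙ` in `I`. -/
def IsChebyshevOn {n : ℕ} (ω : Fin n → ℝ → ℝ) (I : Set ℝ) : Prop :=
  (∀ i, ContinuousOn (ω i) I) ∧
    ∀ x : Fin n → ℝ, (∀ i, x i ∈ I) → StrictMono x → chebV ω x ≠ 0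

/-- `ω = (ω₁,…,ωₙ)` is a positive Chebyshev system on `I`. -/
def IsPosChebyshevOn {n : ℕ} (ω : Fin n → ℝ → ℝ) (I : Set ℝ) : Prop :=
  (∀ i, ContinuousOn (ω i) I) ∧
    ∀ x : Fin n → ℝ, (∀ i, x i ∈ I) → StrictMono x → 0 < chebV ω x

/-- The generalized divided difference `[x₁,…,x_{n+1};f]_ω = D_n(x₁,…,x_{n+1};f)/V_{n+1}(x₁,…,x_{n+1})`,
where the numerator is formed from the first `n` functions of the `(n+1)`-element system `ω`. -/
noncomputable def divDiff {n : ℕ} (ω : Fin (n + 1) → ℝ → ℝ) (f : ℝ → ℝ)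
    (x : Fin (n + 1) → ℝ) : ℝ :=
  chebD (fun i : Fin n => ω i.castSucc) f x / chebV ω x

/-- `f` is `ω`-`(n+1)`-convex on `I` for the `(n+1)`-element system `ω`. -/
def IsConvexOmega {n : ℕ} (ω : Fin (n + 1) → ℝ → ℝ) (I : Set ℝ) (f : ℝ → ℝ) : Prop :=
  ∀ x : Fin (n + 1) → ℝ, (∀ i, x i ∈ I) → StrictMono x →
    ∀ c : Fin (n + 1) → ℝ, (∀ i, (∑ k, c k * ω k (x i)) = f (x i)) →
      (∀ t ∈ I, t ≤ x 0 → 0 ≤ (-1 : ℝ) ^ (n + 1) * (f t - ∑ k, c k * ω k t)) ∧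
      (∀ j : Fin n, ∀ t ∈ I, x j.castSucc ≤ t → t ≤ x j.succ →
        0 ≤ (-1 : ℝ) ^ (n + (j : ℕ) + 2) * (f t - ∑ k, c k * ω k t)) ∧
      (∀ t ∈ I, x (Fin.last n) ≤ t → 0 ≤ f t - ∑ k, c k * ω k t)

/-!
Clearing denominators, the claim is the identity
`Dₙ(x₁,…,x_{n+1};f)·V_{n−1}(x₂,…,xₙ) = D_{n−1}(x₂,…,x_{n+1};f)·Vₙ(x₁,…,xₙ) − D_{n−1}(x₁,…,xₙ;f)·Vₙ(x₂,…,x_{n+1})`.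
It is the Desnanot–Jacobi identity for the matrix of `Dₙ`, bordering the core minor
`V_{n−1}(x₂,…,xₙ)` by the rows `ωₙ, f` and the columns `x_{n+1}, x₁`. When the core is invertible
(here: `(ω₁,…,ω_{n−1})` is Chebyshev) it follows from the Schur complement formula, applied once to
the whole matrix and once to each of the four bordered minors. The Chebyshev property of `ω` makes
both denominators `Vₙ` nonzero.
-/

open Matrix

namespace Matrix

variable {ι R : Type*} [Fintype ι] [DecidableEq ι] [CommRing R]

def borderMinor (M : Matrix (ι ⊕ Fin 2) (ι ⊕ Fin 2) R) (i j : Fin 2) : R :=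
  (M.submatrix (Sum.map id fun _ : Fin 1 => i) (Sum.map id fun _ : Fin 1 => j)).det

/-- The Desnanot–Jacobi identity, for an invertible core block. -/
theorem det_mul_det_toBlocks₁₁ (M : Matrix (ι ⊕ Fin 2) (ι ⊕ Fin 2) R)
    (hM : IsUnit M.toBlocks₁₁.det) :
    M.det * M.toBlocks₁₁.det =
      M.borderMinor 0 0 * M.borderMinor 1 1 - M.borderMinor 0 1 * M.borderMinor 1 0 := by
  have := M.toBlocks₁₁.invertibleOfIsUnitDet hM
  have borderMinor_eq (i j : Fin 2) : M.borderMinor i j = M.toBlocks₁₁.det *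
      (M.toBlocks₂₂ - M.toBlocks₂₁ * ⅟M.toBlocks₁₁ * M.toBlocks₁₂) i j := by
    have hblocks : M.submatrix (Sum.map id fun _ : Fin 1 => i) (Sum.map id fun _ : Fin 1 => j) =
        fromBlocks M.toBlocks₁₁ (M.toBlocks₁₂.submatrix id fun _ => j)
          (M.toBlocks₂₁.submatrix (fun _ => i) id)
          (M.toBlocks₂₂.submatrix (fun _ => i) fun _ => j) := by
      ext (a | a) (b | b) <;> rfl
    rw [borderMinor, hblocks, det_fromBlocks₁₁, det_fin_one]
    simp [mul_apply]
  conv_lhs => arg 1; rw [← fromBlocks_toBlocks M, det_fromBlocks₁₁]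
  rw [borderMinor_eq, borderMinor_eq, borderMinor_eq, borderMinor_eq, det_fin_two]
  ring

end Matrix

theorem Fin.append_vecCons_two {α : Type*} {k : ℕ} (g : Fin k → α) (a b : α) :
    Fin.append g ![a, b] = Fin.snoc (Fin.snoc g a) b := by
  rw [show ![a, b] = Fin.snoc ![a] b by ext i; fin_cases i <;> rfl, Fin.append_snoc,
    Fin.append_right_eq_snoc]
  rfl

theorem chebV_comp_perm {n : ℕ} (ω : Fin n → ℝ → ℝ) (x : Fin n → ℝ) (σ : Equiv.Perm (Fin n)) :
    chebV ω (x ∘ σ) = Equiv.Perm.sign σ * chebV ω x := by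
  rw [chebV, chebV, ← det_permute']
  rfl

theorem chebV_append {k l : ℕ} (g : Fin k → ℝ → ℝ) (g' : Fin l → ℝ → ℝ) (y : Fin k → ℝ)
    (y' : Fin l → ℝ) :
    chebV (Fin.append g g') (Fin.append y y') =
      (of fun a b => Sum.elim g g' a (Sum.elim y y' b)).det := by
  rw [chebV, ← det_submatrix_equiv_self finSumFinEquiv]
  congr 1
  ext (a | a) (b | b) <;> simp

theorem chebD_eq_chebV_snoc {n : ℕ} (ω : Fin n → ℝ → ℝ) (f : ℝ → ℝ) (x : Fin (n + 1) → ℝ) :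
    chebD ω f x = chebV (Fin.snoc ω f) x := by
  rw [chebD, chebV]
  congr 1
  ext i j
  refine Fin.lastCases ?_ (fun i => ?_) i <;> simp

theorem chebV_ne_zero_of_injective {n : ℕ} {ω : Fin n → ℝ → ℝ} {I : Set ℝ}
    (hω : IsChebyshevOn ω I) {x : Fin n → ℝ} (hx : ∀ i, x i ∈ I)
    (hinj : Function.Injective x) : chebV ω x ≠ 0 := by
  have hsorted : StrictMono (x ∘ Tuple.sort x) :=
    (Tuple.monotone_sort x).strictMono_of_injective (hinj.comp (Equiv.injective _))
  have hsorted_ne := hω.2 (x ∘ Tuple.sort x) (fun _ => hx _) hsorted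
  rw [chebV_comp_perm] at hsorted_ne
  exact right_ne_zero_of_mul hsorted_ne

theorem chebV_snoc_snoc_mul_chebV {k : ℕ} (g : Fin k → ℝ → ℝ) (h f : ℝ → ℝ)
    (x : Fin (k + 2) → ℝ) (hg : chebV g (fun j => x j.succ.castSucc) ≠ 0) :
    chebV (Fin.snoc (Fin.snoc g h) f) x * chebV g (fun j => x j.succ.castSucc) =
      chebV (Fin.snoc g f) (x ∘ Fin.succ) * chebV (Fin.snoc g h) (x ∘ Fin.castSucc) -
        chebV (Fin.snoc g f) (x ∘ Fin.castSucc) * chebV (Fin.snoc g h) (x ∘ Fin.succ) := by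
  set y : Fin k → ℝ := fun j => x j.succ.castSucc
  have snoc_last : Fin.snoc y (x (Fin.last _)) = x ∘ Fin.succ := Fin.snoc_init_self (x ∘ Fin.succ)
  have snoc_zero : Fin.snoc y (x 0) = (x ∘ Fin.castSucc) ∘ finRotate (k + 1) := by
    rw [Fin.snoc_eq_cons_rotate, ← Fin.cons_self_tail (x ∘ Fin.castSucc)]
    rfl
  have append_rotate : Fin.append y ![x (Fin.last _), x 0] = x ∘ finRotate (k + 2) := by
    rw [Fin.append_vecCons_two, snoc_last, Fin.snoc_eq_cons_rotate, ← Fin.cons_self_tail x]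
    rfl
  -- Columns in the order `x₁,…,x_k, x_{k+1}, x₀`, so that the core block is `chebV g y`;
  -- moving `x₀` to the end is what the signs below pay for.
  let M : Matrix (Fin k ⊕ Fin 2) (Fin k ⊕ Fin 2) ℝ :=
    of fun a b => Sum.elim g ![h, f] a (Sum.elim y ![x (Fin.last _), x 0] b)
  have det_M :
      M.det = Equiv.Perm.sign (finRotate (k + 2)) * chebV (Fin.snoc (Fin.snoc g h) f) x := by
    rw [← chebV_comp_perm, ← append_rotate, ← Fin.append_vecCons_two, chebV_append]
  have borderMinor_M (i j : Fin 2) : M.borderMinor i j =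
      chebV (Fin.snoc g (![h, f] i)) (Fin.snoc y (![x (Fin.last _), x 0] j)) := by
    rw [← Fin.append_right_eq_snoc g fun _ => ![h, f] i,
      ← Fin.append_right_eq_snoc y fun _ => ![x (Fin.last _), x 0] j, chebV_append, borderMinor]
    congr 1
    ext (a | a) (b | b) <;> rfl
  have jacobi := M.det_mul_det_toBlocks₁₁ (isUnit_iff_ne_zero.2 hg)
  rw [det_M, borderMinor_M, borderMinor_M, borderMinor_M, borderMinor_M] at jacobi
  simp only [cons_val_zero, cons_val_one, snoc_last, snoc_zero, chebV_comp_perm,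
    sign_finRotate, Nat.add_sub_cancel] at jacobi
  push_cast [pow_succ] at jacobi
  change _ * chebV g y = _ at jacobi
  rcases neg_one_pow_eq_or ℝ k with hs | hs <;> rw [hs] at jacobi
  · linear_combination -jacobi
  · linear_combination jacobi

theorem divDiff_sub_divDiff_general {m : ℕ} (I : Set ℝ)
    (ω : Fin (m + 2) → ℝ → ℝ)
    (hω : IsChebyshevOn ω I)
    (hω' : IsChebyshevOn (fun i : Fin (m + 1) => ω i.castSucc) I)
    (f : ℝ → ℝ) (x : Fin (m + 3) → ℝ) (hx : ∀ i, x i ∈ I)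
    (hinj : Function.Injective x) :
    divDiff ω f (x ∘ Fin.succ) - divDiff ω f (x ∘ Fin.castSucc) =
      chebD ω f x *
          chebV (fun i : Fin (m + 1) => ω i.castSucc)
            (fun j : Fin (m + 1) => x j.succ.castSucc) /
        (chebV ω (x ∘ Fin.succ) * chebV ω (x ∘ Fin.castSucc)) := by
  have hVs : chebV ω (x ∘ Fin.succ) ≠ 0 :=
    chebV_ne_zero_of_injective hω (fun _ => hx _) (hinj.comp (Fin.succ_injective _))
  have hVc : chebV ω (x ∘ Fin.castSucc) ≠ 0 :=
    chebV_ne_zero_of_injective hω (fun _ => hx _) (hinj.comp (Fin.castSucc_injective _))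
  have hVcore := chebV_ne_zero_of_injective hω' (fun _ => hx _)
    (hinj.comp ((Fin.castSucc_injective _).comp (Fin.succ_injective _)))
  have key := chebV_snoc_snoc_mul_chebV (fun i => ω i.castSucc) (ω (Fin.last _)) f x hVcore
  have snoc_init : Fin.snoc (fun i => ω i.castSucc) (ω (Fin.last _)) = ω := Fin.snoc_init_self ω
  rw [snoc_init] at key
  rw [divDiff, divDiff, chebD_eq_chebV_snoc, chebD_eq_chebV_snoc, chebD_eq_chebV_snoc,
    div_sub_div _ _ hVs hVc, key]
  ring

/-- **Theorem 1.** For a Chebyshev system `ω` of `m+2` functions whose initial `m+1`-element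
subsystem is also Chebyshev, the generalized divided differences over consecutive windows of
`m+3` pairwise distinct points of `I` satisfy
`[x₂,…,x_{n+1};f]_ω − [x₁,…,xₙ;f]_ω = Dₙ(x₁,…,x_{n+1};f)·V_{n−1}(x₂,…,xₙ)/(Vₙ(x₂,…,x_{n+1})·Vₙ(x₁,…,xₙ))`. -/
theorem divDiff_sub_divDiff {m : ℕ} (I : Set ℝ) (hI : I.OrdConnected)
    (ω : Fin (m + 2) → ℝ → ℝ)
    (hω : IsChebyshevOn ω I)
    (hω' : IsChebyshevOn (fun i : Fin (m + 1) => ω i.castSucc) I)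
    (f : ℝ → ℝ) (x : Fin (m + 3) → ℝ) (hx : ∀ i, x i ∈ I)
    (hinj : Function.Injective x) :
    divDiff ω f (x ∘ Fin.succ) - divDiff ω f (x ∘ Fin.castSucc) =
      chebD ω f x *
          chebV (fun i : Fin (m + 1) => ω i.castSucc)
            (fun j : Fin (m + 1) => x j.succ.castSucc) /
        (chebV ω (x ∘ Fin.succ) * chebV ω (x ∘ Fin.castSucc)) :=
  divDiff_sub_divDiff_general I ω hω hω' f x hx hinj
end

section
/- Let n ≥ 2, let I ⊆ ℝ be an interval, and let ω = (ω₁,…,ωₙ) be a positive Chebyshev system on I such that (ω₁,…,ω_{n−1}) is also a positive Chebyshev system on I. A function f : I → ℝ is ω-n-convex if and only if [x₂,…,x_{n+1};f]_ω ≥ [x₁,…,xₙ;f]_ω for all points x₁,…,x_{n+1} ∈ I with x₁ < ⋯ < x_{n+1}. -/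
/-!
Let `p = ∑ cₖ ωₖ` interpolate `f` at `z₁ < ⋯ < zₙ`. Subtracting `p` from the last row of
`Dₙ(z₁,…,z_{n+1};f)` and expanding along that row gives `Dₙ = (f - p)(z_{n+1}) · Vₙ(z₁,…,zₙ)`, and
the same computation for the subsystem gives `[z₁,…,zₙ;f]_ω = cₙ` and
`[z₂,…,z_{n+1};f]_ω = cₙ + (f - p)(z_{n+1}) · V_{n-1}(z₂,…,zₙ) / Vₙ(z₂,…,z_{n+1})`.
As all the determinants `V` are positive, monotonicity of the divided differences says exactly that
`Dₙ(·;f) ≥ 0` on increasing `(n+1)`-tuples. So does `ω`-`n`-convexity: inserting `t` into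
`x₁ < ⋯ < xₙ` at position `k` (counting from `0`) gives `Dₙ = (-1)^(n+k) (f - p)(t) Vₙ(x)`, which is
the sign pattern of the definition.
-/

namespace Matrix

variable {R : Type*} [CommRing R] {n : ℕ}

noncomputable def detSnoc (W : Fin n → Fin (n + 1) → R) : (Fin (n + 1) → R) →ₗ[R] R :=
  (detRowAlternating : (Fin (n + 1) → R) [⋀^Fin (n + 1)]→ₗ[R] R).toMultilinearMap.toLinearMap
    (Fin.snoc W 0) (Fin.last n)

theorem detSnoc_apply (W : Fin n → Fin (n + 1) → R) (r : Fin (n + 1) → R) :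
    detSnoc W r = (of (Fin.snoc W r : Fin (n + 1) → Fin (n + 1) → R)).det := by
  simp only [detSnoc, MultilinearMap.toLinearMap_apply, Fin.update_snoc_last]
  rfl

theorem detSnoc_self (W : Fin n → Fin (n + 1) → R) (i : Fin n) : detSnoc W (W i) = 0 := by
  rw [detSnoc_apply]
  exact det_zero_of_row_eq (Fin.castSucc_lt_last i).ne (by ext; simp)

theorem detSnoc_init_self (M : Matrix (Fin (n + 1)) (Fin (n + 1)) R) :
    detSnoc (fun i => M i.castSucc) (M (Fin.last n)) = M.det := by
  rw [detSnoc_apply]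
  exact congrArg det (Fin.snoc_init_self M)

theorem detSnoc_eq_of_eq_zero_of_ne (W : Fin n → Fin (n + 1) → R) (r : Fin (n + 1) → R)
    (k : Fin (n + 1)) (hr : ∀ j ≠ k, r j = 0) :
    detSnoc W r = (-1) ^ (n + k : ℕ) * r k * (of fun i j => W i (k.succAbove j)).det := by
  rw [detSnoc_apply, det_succ_row _ (Fin.last n), Finset.sum_eq_single k]
  · congr 2
    · simp
    · ext i j
      simp
  · intro j _ hj
    simp [hr j hj]
  · simp

end Matrix

open Matrix

section Determinants

variable {n : ℕ}

theorem chebD_eq_detSnoc (ω : Fin n → ℝ → ℝ) (f : ℝ → ℝ) (x : Fin (n + 1) → ℝ) :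
    chebD ω f x = detSnoc (fun i j => ω i (x j)) (fun j => f (x j)) :=
  (detSnoc_apply _ _).symm

theorem chebD_sub_sum (ω : Fin n → ℝ → ℝ) (f : ℝ → ℝ) (x : Fin (n + 1) → ℝ) (c : Fin n → ℝ) :
    chebD ω (fun t => f t - ∑ k, c k * ω k t) x = chebD ω f x := by
  have hrow : (fun j => f (x j) - ∑ k, c k * ω k (x j))
      = (fun j => f (x j)) - ∑ k, c k • fun j => ω k (x j) := by
    ext j
    simp
  rw [chebD_eq_detSnoc, chebD_eq_detSnoc, hrow, map_sub, map_sum, sub_eq_self]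
  exact Finset.sum_eq_zero fun k _ => by rw [map_smul, detSnoc_self _ k, smul_zero]

theorem chebD_castSucc_sub_sum (ω : Fin (n + 1) → ℝ → ℝ) (f : ℝ → ℝ) (y : Fin (n + 1) → ℝ)
    (c : Fin (n + 1) → ℝ) :
    chebD (fun i : Fin n => ω i.castSucc) (fun t => f t - ∑ k, c k * ω k t) y
      = chebD (fun i : Fin n => ω i.castSucc) f y - c (Fin.last n) * chebV ω y := by
  have hsplit : (fun t => f t - ∑ k, c k * ω k t) = fun t =>
      (f t - c (Fin.last n) * ω (Fin.last n) t) - ∑ k : Fin n, c k.castSucc * ω k.castSucc t := by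
    ext t
    rw [Fin.sum_univ_castSucc]
    ring
  have hrow : (fun j => f (y j) - c (Fin.last n) * ω (Fin.last n) (y j))
      = (fun j => f (y j)) - c (Fin.last n) • fun j => ω (Fin.last n) (y j) := by
    ext j
    simp
  rw [hsplit, chebD_sub_sum, chebD_eq_detSnoc, chebD_eq_detSnoc, hrow, map_sub, map_smul,
    chebV, ← detSnoc_init_self, smul_eq_mul]
  rfl

theorem chebD_eq_of_eq_zero_of_ne (ω : Fin n → ℝ → ℝ) (g : ℝ → ℝ) (x : Fin (n + 1) → ℝ)
    (k : Fin (n + 1)) (hg : ∀ j ≠ k, g (x j) = 0) :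
    chebD ω g x = (-1) ^ (n + k : ℕ) * g (x k) * chebV ω (x ∘ k.succAbove) := by
  rw [chebD_eq_detSnoc, detSnoc_eq_of_eq_zero_of_ne _ _ k hg]
  rfl

theorem chebD_eq_mul_chebV_of_eq_zero (ω : Fin n → ℝ → ℝ) (g : ℝ → ℝ) (x : Fin (n + 1) → ℝ)
    (hg : ∀ i : Fin n, g (x i.castSucc) = 0) :
    chebD ω g x = g (x (Fin.last n)) * chebV ω (x ∘ Fin.castSucc) := by
  rw [chebD_eq_of_eq_zero_of_ne ω g x (Fin.last n), Fin.val_last, Fin.succAbove_last,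
    Even.neg_one_pow ⟨n, rfl⟩, one_mul]
  intro j hj
  obtain ⟨i, rfl⟩ := Fin.exists_castSucc_eq.mpr hj
  exact hg i

theorem chebD_insertNth (ω : Fin n → ℝ → ℝ) (f : ℝ → ℝ) (x : Fin n → ℝ) (c : Fin n → ℝ)
    (hc : ∀ i, ∑ k, c k * ω k (x i) = f (x i)) (k : Fin (n + 1)) (t : ℝ) :
    chebD ω f (k.insertNth t x)
      = (-1) ^ (n + k : ℕ) * (f t - ∑ l, c l * ω l t) * chebV ω x := by
  rw [← chebD_sub_sum ω f _ c, chebD_eq_of_eq_zero_of_ne _ _ _ k, Fin.insertNth_apply_same,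
    Fin.insertNth_comp_succAbove]
  intro j hj
  obtain ⟨i, rfl⟩ := Fin.exists_succAbove_eq hj
  rw [Fin.insertNth_apply_succAbove, hc i, sub_self]

theorem chebD_eq_sub_mul_chebV (ω : Fin n → ℝ → ℝ) (f : ℝ → ℝ) (z : Fin (n + 1) → ℝ)
    (c : Fin n → ℝ) (hc : ∀ i : Fin n, ∑ k, c k * ω k (z i.castSucc) = f (z i.castSucc)) :
    chebD ω f z
      = (f (z (Fin.last n)) - ∑ k, c k * ω k (z (Fin.last n))) * chebV ω (z ∘ Fin.castSucc) := by
  rw [← chebD_sub_sum ω f z c]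
  exact chebD_eq_mul_chebV_of_eq_zero _ _ _ fun i => sub_eq_zero.mpr (hc i).symm

end Determinants

theorem exists_sum_mul_eq_of_chebV_ne_zero {n : ℕ} (ω : Fin n → ℝ → ℝ) (f : ℝ → ℝ)
    (x : Fin n → ℝ) (hV : chebV ω x ≠ 0) :
    ∃ c : Fin n → ℝ, ∀ i, ∑ k, c k * ω k (x i) = f (x i) := by
  obtain ⟨c, hc⟩ := vecMul_surjective_iff_isUnit.mpr ((isUnit_iff_isUnit_det _).mpr hV.isUnit)
    (fun i => f (x i))
  exact ⟨c, congrFun hc⟩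

section DividedDifferences

variable {n : ℕ} (ω : Fin (n + 1) → ℝ → ℝ) (f : ℝ → ℝ)

theorem divDiff_eq_of_interp (y : Fin (n + 1) → ℝ) (c : Fin (n + 1) → ℝ)
    (hc : ∀ i, ∑ k, c k * ω k (y i) = f (y i)) (hV : chebV ω y ≠ 0) :
    divDiff ω f y = c (Fin.last n) := by
  have hres : ∀ j, f (y j) - ∑ k, c k * ω k (y j) = 0 := fun j => sub_eq_zero.mpr (hc j).symm
  have hzero : chebD (fun i : Fin n => ω i.castSucc) (fun t => f t - ∑ k, c k * ω k t) y = 0 := by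
    rw [chebD_eq_of_eq_zero_of_ne _ _ _ 0 fun j _ => hres j, hres 0, mul_zero, zero_mul]
  rw [chebD_castSucc_sub_sum, sub_eq_zero] at hzero
  rw [divDiff, hzero, mul_div_cancel_right₀ _ hV]

theorem divDiff_comp_succ (z : Fin (n + 2) → ℝ) (c : Fin (n + 1) → ℝ)
    (hc : ∀ i : Fin (n + 1), ∑ k, c k * ω k (z i.castSucc) = f (z i.castSucc))
    (hV : chebV ω (z ∘ Fin.succ) ≠ 0) :
    divDiff ω f (z ∘ Fin.succ) = c (Fin.last n)
      + (f (z (Fin.last (n + 1))) - ∑ k, c k * ω k (z (Fin.last (n + 1))))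
        * chebV (fun i : Fin n => ω i.castSucc) ((z ∘ Fin.succ) ∘ Fin.castSucc)
        / chebV ω (z ∘ Fin.succ) := by
  have h := chebD_castSucc_sub_sum ω f (z ∘ Fin.succ) c
  rw [chebD_eq_mul_chebV_of_eq_zero _ _ _ fun i => ?_] at h
  · simp only [Function.comp_apply, Fin.succ_last] at h
    rw [divDiff]
    field_simp
    linear_combination -h
  · simp only [Function.comp_apply, Fin.succ_castSucc, hc i.succ, sub_self]

theorem divDiff_le_divDiff_iff (z : Fin (n + 2) → ℝ) (h₀ : 0 < chebV ω (z ∘ Fin.castSucc))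
    (h₁ : 0 < chebV ω (z ∘ Fin.succ))
    (h₂ : 0 < chebV (fun i : Fin n => ω i.castSucc) ((z ∘ Fin.succ) ∘ Fin.castSucc)) :
    divDiff ω f (z ∘ Fin.castSucc) ≤ divDiff ω f (z ∘ Fin.succ) ↔ 0 ≤ chebD ω f z := by
  obtain ⟨c, hc⟩ := exists_sum_mul_eq_of_chebV_ne_zero ω f _ h₀.ne'
  rw [divDiff_eq_of_interp ω f _ c hc h₀.ne', divDiff_comp_succ ω f z c hc h₁.ne',
    chebD_eq_sub_mul_chebV ω f z c hc, le_add_iff_nonneg_right, mul_div_assoc,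
    mul_nonneg_iff_of_pos_right (div_pos h₂ h₁), mul_nonneg_iff_of_pos_right h₀]

end DividedDifferences

section Convexity

variable {n : ℕ} {I : Set ℝ} {f : ℝ → ℝ}

theorem neg_one_pow_mul_sub_sum_nonneg {ω : Fin n → ℝ → ℝ}
    (hD : ∀ z : Fin (n + 1) → ℝ, (∀ i, z i ∈ I) → StrictMono z → 0 ≤ chebD ω f z)
    {x : Fin n → ℝ} (hxI : ∀ i, x i ∈ I) (hV : 0 < chebV ω x) {c : Fin n → ℝ}
    (hc : ∀ i, ∑ k, c k * ω k (x i) = f (x i)) {k : Fin (n + 1)} {t : ℝ} (ht : t ∈ I)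
    (hmono : StrictMono (k.insertNth t x)) :
    0 ≤ (-1) ^ (n + k : ℕ) * (f t - ∑ l, c l * ω l t) := by
  have hzI : ∀ j, (k.insertNth t x : Fin (n + 1) → ℝ) j ∈ I := by
    intro j
    cases j using Fin.succAboveCases k <;> simp [ht, hxI]
  have h := hD _ hzI hmono
  rwa [chebD_insertNth ω f x c hc, mul_nonneg_iff_of_pos_right hV] at h

theorem isConvexOmega_iff_chebD_nonneg {ω : Fin (n + 1) → ℝ → ℝ}
    (hV : ∀ x : Fin (n + 1) → ℝ, (∀ i, x i ∈ I) → StrictMono x → 0 < chebV ω x) :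
    IsConvexOmega ω I f ↔
      ∀ z : Fin (n + 2) → ℝ, (∀ i, z i ∈ I) → StrictMono z → 0 ≤ chebD ω f z := by
  constructor
  · intro hconv z hzI hz
    have hV₀ := hV _ (fun i => hzI _) (hz.comp Fin.strictMono_castSucc)
    obtain ⟨c, hc⟩ := exists_sum_mul_eq_of_chebV_ne_zero ω f _ hV₀.ne'
    obtain ⟨-, -, hlast⟩ := hconv _ (fun i => hzI _) (hz.comp Fin.strictMono_castSucc) c hc
    rw [chebD_eq_sub_mul_chebV ω f z c hc]
    exact mul_nonneg (hlast _ (hzI _) (hz (Fin.castSucc_lt_last _)).le) hV₀.le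
  · intro hD x hxI hx c hc
    have hsign : ∀ (k : Fin (n + 2)) (t : ℝ), t ∈ I → StrictMono (k.insertNth t x) →
        0 ≤ (-1) ^ (n + 1 + k : ℕ) * (f t - ∑ l, c l * ω l t) :=
      fun _ _ => neg_one_pow_mul_sub_sum_nonneg hD hxI (hV x hxI hx) hc
    refine ⟨fun t ht hle => ?_, fun j t ht h₁ h₂ => ?_, fun t ht hle => ?_⟩
    · rcases hle.lt_or_eq with hlt | rfl
      · simpa using hsign 0 t ht (Fin.strictMono_insertNth_zero hx t hlt)
      · simp [hc 0]
    · rcases h₁.lt_or_eq with hlt₁ | rfl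
      · rcases h₂.lt_or_eq with hlt₂ | rfl
        · convert hsign _ t ht (Fin.strictMono_insertNth hx j t hlt₁ hlt₂) using 3
          simp only [Fin.val_succ, Fin.val_castSucc]
          ring
        · simp [hc]
      · simp [hc]
    · rcases hle.lt_or_eq with hlt | rfl
      · simpa [Even.neg_one_pow ⟨n + 1, rfl⟩] using
          hsign _ t ht (Fin.strictMono_insertNth_last hx t hlt)
      · simp [hc]

end Convexity

theorem isConvexOmega_iff_divDiff_mono_general {m : ℕ} (I : Set ℝ)
    (ω : Fin (m + 2) → ℝ → ℝ)
    (hω : IsPosChebyshevOn ω I)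
    (hω' : IsPosChebyshevOn (fun i : Fin (m + 1) => ω i.castSucc) I)
    (f : ℝ → ℝ) :
    IsConvexOmega ω I f ↔
      ∀ x : Fin (m + 3) → ℝ, (∀ i, x i ∈ I) → StrictMono x →
        divDiff ω f (x ∘ Fin.castSucc) ≤ divDiff ω f (x ∘ Fin.succ) := by
  obtain ⟨-, hV⟩ := hω
  obtain ⟨-, hV'⟩ := hω'
  rw [isConvexOmega_iff_chebD_nonneg hV]
  refine forall₃_congr fun z hzI hz => (divDiff_le_divDiff_iff ω f z ?_ ?_ ?_).symm
  · exact hV _ (fun i => hzI _) (hz.comp Fin.strictMono_castSucc)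
  · exact hV _ (fun i => hzI _) (hz.comp Fin.strictMono_succ)
  · exact hV' _ (fun i => hzI _) ((hz.comp Fin.strictMono_succ).comp Fin.strictMono_castSucc)

/-- **Corollary 1.** For a positive Chebyshev system `ω` of `m+2` functions whose initial
subsystem is also a positive Chebyshev system, `f` is `ω`-`n`-convex iff
`[x₂,…,x_{n+1};f]_ω ≥ [x₁,…,xₙ;f]_ω` for all `x₁ < ⋯ < x_{n+1}` in `I`. -/
theorem isConvexOmega_iff_divDiff_mono {m : ℕ} (I : Set ℝ) (hI : I.OrdConnected)
    (ω : Fin (m + 2) → ℝ → ℝ)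
    (hω : IsPosChebyshevOn ω I)
    (hω' : IsPosChebyshevOn (fun i : Fin (m + 1) => ω i.castSucc) I)
    (f : ℝ → ℝ) :
    IsConvexOmega ω I f ↔
      ∀ x : Fin (m + 3) → ℝ, (∀ i, x i ∈ I) → StrictMono x →
        divDiff ω f (x ∘ Fin.castSucc) ≤ divDiff ω f (x ∘ Fin.succ) :=
  isConvexOmega_iff_divDiff_mono_general I ω hω hω' f
end

section
/- Let n ≥ 2, let I ⊆ ℝ be an interval, and let ω = (ω₁,…,ωₙ) be a positive Chebyshev system on I such that (ω₁,…,ω_{n−1}) is also a positive Chebyshev system on I. If f : I → ℝ is ω-n-convex, then for all points x₁,…,x_{n−1} in the interior of I with x₁ < ⋯ < x_{n−1} there exist constants c₁,…,cₙ ∈ ℝ such that the function g = c₁ω₁ + ⋯ + cₙωₙ satisfies g(xₖ) = f(xₖ) for k = 1,…,n−1, and moreover (−1)^{n−1}(f(x) − g(x)) ≤ 0 for x ∈ I with x < x₁; (−1)^{n−k}(f(x) − g(x)) ≤ 0 for x_{k−1} < x < xₖ, k = 2,…,n−1; and f(x) − g(x) ≥ 0 for x ∈ I with x > x_{n−1}.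 -/
open Matrix


private lemma interp_exists {k : ℕ} (ω : Fin k → ℝ → ℝ) (p : Fin k → ℝ) (f : ℝ → ℝ)
    (h : chebV ω p ≠ 0) : ∃ c : Fin k → ℝ, ∀ j, (∑ i, c i * ω i (p j)) = f (p j) := by
  set N : Matrix (Fin k) (Fin k) ℝ := Matrix.of fun i j => ω i (p j) with hN
  have hdetT : N.transpose.det ≠ 0 := by rwa [Matrix.det_transpose]
  refine ⟨(N.transpose)⁻¹ *ᵥ (fun j => f (p j)), fun j => ?_⟩
  have h2 : N.transpose *ᵥ ((N.transpose)⁻¹ *ᵥ fun j => f (p j)) = fun j => f (p j) := by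
    rw [Matrix.mulVec_mulVec, Matrix.mul_nonsing_inv _ (isUnit_iff_ne_zero.2 hdetT),
      Matrix.one_mulVec]
  have h3 := congrFun h2 j
  rw [← h3]
  simp [Matrix.mulVec, dotProduct, Matrix.transpose_apply, hN, mul_comm]

private lemma strictMono_snoc {k : ℕ} {x : Fin (k+1) → ℝ} {y : ℝ} (hx : StrictMono x)
    (hy : x (Fin.last k) < y) : StrictMono (Fin.snoc x y : Fin (k+2) → ℝ) := by
  intro i j hij
  induction j using Fin.lastCases with
  | last =>
    induction i using Fin.lastCases with
    | last => exact absurd hij (lt_irrefl _)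
    | cast i =>
      simp only [Fin.snoc_castSucc, Fin.snoc_last]
      exact lt_of_le_of_lt (hx.monotone (Fin.le_last i)) hy
  | cast j =>
    induction i using Fin.lastCases with
    | last => exact absurd (lt_trans hij (Fin.castSucc_lt_last j)) (lt_irrefl _)
    | cast i =>
      simp only [Fin.snoc_castSucc]
      exact hx (Fin.castSucc_lt_castSucc_iff.mp hij)

private lemma strictMono_cons {k : ℕ} {x : Fin (k+1) → ℝ} {w : ℝ} (hx : StrictMono x)
    (hw : w < x 0) : StrictMono (Fin.cons w x : Fin (k+2) → ℝ) := by
  intro i j hij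
  induction i using Fin.cases with
  | zero =>
    induction j using Fin.cases with
    | zero => exact absurd hij (lt_irrefl _)
    | succ j =>
      simp only [Fin.cons_zero, Fin.cons_succ]
      exact lt_of_lt_of_le hw (hx.monotone (Fin.zero_le j))
  | succ i =>
    induction j using Fin.cases with
    | zero => exact absurd hij (Fin.not_lt.mpr (Fin.zero_le _))
    | succ j =>
      simp only [Fin.cons_succ]
      exact hx (Fin.succ_lt_succ_iff.mp hij)

private lemma cheb_expand {m : ℕ} (ω : Fin (m+2) → ℝ → ℝ) (x : Fin (m+1) → ℝ) :
    ∃ d : Fin (m+2) → ℝ, ∀ t, chebV ω (Fin.snoc x t) = ∑ i, d i * ω i t := by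
  refine ⟨fun i => (-1 : ℝ) ^ ((i : ℕ) + (m + 1)) *
    Matrix.det (Matrix.of fun a b => ω (i.succAbove a) (x b)), fun t => ?_⟩
  rw [chebV, Matrix.det_succ_column _ (Fin.last (m+1))]
  refine Finset.sum_congr rfl fun i _ => ?_
  have h2 : ((Matrix.of fun i j => ω i ((Fin.snoc x t : Fin (m+2) → ℝ) j)).submatrix i.succAbove
      (Fin.last (m+1)).succAbove) = Matrix.of fun a b => ω (i.succAbove a) (x b) := by
    ext a b
    simp [Fin.succAbove_last]
  rw [h2]
  have h1 : (Matrix.of fun i j => ω i ((Fin.snoc x t : Fin (m+2) → ℝ) j)) i (Fin.last (m+1)) = ω i t := by simp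
  rw [h1]
  simp only [Fin.val_last]
  ring

private lemma cheb_zero {m : ℕ} (ω : Fin (m+2) → ℝ → ℝ) (x : Fin (m+1) → ℝ) (j : Fin (m+1)) :
    chebV ω (Fin.snoc x (x j)) = 0 := by
  rw [chebV]
  apply Matrix.det_zero_of_column_eq (Fin.ne_of_lt (Fin.castSucc_lt_last j))
  intro k
  simp

private lemma cheb_cons {m : ℕ} (ω : Fin (m+2) → ℝ → ℝ) (x : Fin (m+1) → ℝ) (t : ℝ) :
    chebV ω (Fin.snoc x t) = (-1:ℝ)^(m+1) * chebV ω (Fin.cons t x) := by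
  have hsub : ((Matrix.of fun i j => ω i ((Fin.cons t x : Fin (m+2) → ℝ) j)).submatrix id (finRotate (m+2)))
      = (Matrix.of fun i j => ω i ((Fin.snoc x t : Fin (m+2) → ℝ) j)) := by
    ext i j
    simp only [Matrix.submatrix_apply, id_eq, Matrix.of_apply]
    congr 1
    induction j using Fin.lastCases with
    | last => rw [finRotate_last, Fin.cons_zero, Fin.snoc_last]
    | cast a => rw [finRotate_succ_apply, Fin.coeSucc_eq_succ, Fin.cons_succ, Fin.snoc_castSucc]
  have hdp := Matrix.det_permute' (finRotate (m+2)) (Matrix.of fun i j => ω i ((Fin.cons t x : Fin (m+2) → ℝ) j))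
  rw [hsub, sign_finRotate] at hdp
  rw [chebV, chebV, hdp]
  norm_num

set_option maxHeartbeats 1000000 in
/-- **Theorem 3, necessity.** If `f` is `ω`-`n`-convex (`n = m+2`), then for all
`x₁ < ⋯ < x_{n−1}` in the interior of `I` there is `g = c₁ω₁ + ⋯ + cₙωₙ` interpolating `f`
at `x₁,…,x_{n−1}` with `(−1)^{n−1}(f−g) ≤ 0` left of `x₁`, `(−1)^{n−k}(f−g) ≤ 0` on
`(x_{k−1},x_k)` for `k = 2,…,n−1`, and `f − g ≥ 0` right of `x_{n−1}`. -/
theorem isConvexOmega_support_necessity {m : ℕ} (I : Set ℝ) (hI : I.OrdConnected)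
    (ω : Fin (m + 2) → ℝ → ℝ)
    (hω : IsPosChebyshevOn ω I)
    (hω' : IsPosChebyshevOn (fun i : Fin (m + 1) => ω i.castSucc) I)
    (f : ℝ → ℝ) (hf : IsConvexOmega ω I f)
    (x : Fin (m + 1) → ℝ) (hx : ∀ i, x i ∈ interior I) (hmono : StrictMono x) :
    ∃ c : Fin (m + 2) → ℝ,
      (∀ k, (∑ i, c i * ω i (x k)) = f (x k)) ∧
      (∀ t ∈ I, t < x 0 → (-1 : ℝ) ^ (m + 1) * (f t - ∑ i, c i * ω i t) ≤ 0) ∧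
      (∀ j : Fin m, ∀ t : ℝ, x j.castSucc < t → t < x j.succ →
        (-1 : ℝ) ^ (m - (j : ℕ)) * (f t - ∑ i, c i * ω i t) ≤ 0) ∧
      (∀ t ∈ I, x (Fin.last m) < t → 0 ≤ f t - ∑ i, c i * ω i t) := by
  obtain ⟨hcont, hV⟩ := hω
  have hxI : ∀ i, x i ∈ I := fun i => interior_subset (hx i)
  -- auxiliary points y₀ > x_m and w < x_0 inside I
  obtain ⟨ε, hε, hball⟩ := Metric.mem_nhds_iff.1 (mem_interior_iff_mem_nhds.1 (hx (Fin.last m)))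
  have hy₀I : x (Fin.last m) + ε / 2 ∈ I := hball (by
    rw [Metric.mem_ball, Real.dist_eq, add_sub_cancel_left, abs_of_pos (by linarith)]
    linarith)
  have hy₀gt : x (Fin.last m) < x (Fin.last m) + ε / 2 := by linarith
  obtain ⟨δ, hδ, hball'⟩ := Metric.mem_nhds_iff.1 (mem_interior_iff_mem_nhds.1 (hx 0))
  set w : ℝ := x 0 - δ / 2 with hwdef
  have hwI : w ∈ I := hball' (by
    rw [Metric.mem_ball, Real.dist_eq, hwdef]
    rw [show x 0 - δ / 2 - x 0 = -(δ/2) by ring, abs_neg, abs_of_pos (by linarith)]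
    linarith)
  have hwlt : w < x 0 := by rw [hwdef]; linarith
  -- snoc tuples
  have hsnocI : ∀ {y : ℝ}, y ∈ I → ∀ i, (Fin.snoc x y : Fin (m+2) → ℝ) i ∈ I := by
    intro y hy i
    induction i using Fin.lastCases with
    | last => simpa using hy
    | cast i => simpa using hxI i
  have hpos : ∀ y ∈ I, x (Fin.last m) < y → 0 < chebV ω (Fin.snoc x y) :=
    fun y hy hlt => hV _ (hsnocI hy) (strictMono_snoc hmono hlt)
  -- base interpolant c₀
  obtain ⟨c₀, hc₀⟩ := interp_exists ω (Fin.snoc x (x (Fin.last m) + ε / 2)) f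
    (ne_of_gt (hpos _ hy₀I hy₀gt))
  have hg₀x : ∀ j, (∑ k, c₀ k * ω k (x j)) = f (x j) := by
    intro j
    have := hc₀ j.castSucc
    rwa [Fin.snoc_castSucc] at this
  obtain ⟨d, hexp⟩ := cheb_expand ω x
  have key : ∀ (s t : ℝ), (∑ k, (c₀ k + s * d k) * ω k t)
      = (∑ k, c₀ k * ω k t) + s * chebV ω (Fin.snoc x t) := by
    intro s t
    rw [hexp t, Finset.mul_sum, ← Finset.sum_add_distrib]
    exact Finset.sum_congr rfl fun k _ => by ring
  -- the family of interpolants through (x, y)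
  have hfy : ∀ y, y ∈ I → x (Fin.last m) < y →
      ∀ i : Fin (m+2), (∑ k, (c₀ k + ((f y - ∑ k, c₀ k * ω k y) / chebV ω (Fin.snoc x y)) * d k)
        * ω k ((Fin.snoc x y : Fin (m+2) → ℝ) i)) = f ((Fin.snoc x y : Fin (m+2) → ℝ) i) := by
    intro y hyI hylt i
    rw [key]
    induction i using Fin.lastCases with
    | last =>
      rw [Fin.snoc_last, div_mul_cancel₀ _ (ne_of_gt (hpos y hyI hylt))]
      ring
    | cast j =>
      rw [Fin.snoc_castSucc, cheb_zero ω x j, hg₀x j]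
      ring
  -- the set of slopes
  set S : Set ℝ := {r | ∃ y, y ∈ I ∧ x (Fin.last m) < y ∧
    r = (f y - ∑ k, c₀ k * ω k y) / chebV ω (Fin.snoc x y)} with hSdef
  have hSne : S.Nonempty := ⟨_, _, hy₀I, hy₀gt, rfl⟩
  -- lower bound via interpolant through (w, x)
  have hconsI : ∀ i, (Fin.cons w x : Fin (m+2) → ℝ) i ∈ I := by
    intro i
    induction i using Fin.cases with
    | zero => simpa using hwI
    | succ j => simpa using hxI j
  have hconsPos : 0 < chebV ω (Fin.cons w x) := hV _ hconsI (strictMono_cons hmono hwlt)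
  have hBw : chebV ω (Fin.snoc x w) ≠ 0 := by
    rw [cheb_cons ω x w]
    exact mul_ne_zero (pow_ne_zero _ (by norm_num)) (ne_of_gt hconsPos)
  set sw : ℝ := (f w - ∑ k, c₀ k * ω k w) / chebV ω (Fin.snoc x w) with hswdef
  have hinterpw : ∀ i : Fin (m+2),
      (∑ k, (c₀ k + sw * d k) * ω k ((Fin.cons w x : Fin (m+2) → ℝ) i))
        = f ((Fin.cons w x : Fin (m+2) → ℝ) i) := by
    intro i
    rw [key]
    induction i using Fin.cases with
    | zero =>
      simp only [Fin.cons_zero]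
      rw [hswdef, div_mul_cancel₀ _ hBw]
      ring
    | succ j =>
      simp only [Fin.cons_succ]
      rw [cheb_zero ω x j, hg₀x j]
      ring
  have hlast : (Fin.cons w x : Fin (m+2) → ℝ) (Fin.last (m+1)) = x (Fin.last m) := by
    rw [← Fin.succ_last, Fin.cons_succ]
  have hlb : ∀ r ∈ S, sw ≤ r := by
    rintro r ⟨y, hyI, hylt, rfl⟩
    have H := (hf (Fin.cons w x) hconsI (strictMono_cons hmono hwlt)
      (fun k => c₀ k + sw * d k) hinterpw).2.2 y hyI (by rw [hlast]; exact hylt.le)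
    rw [key] at H
    rw [le_div_iff₀ (hpos y hyI hylt)]
    linarith
  have hSbdd : BddBelow S := ⟨sw, hlb⟩
  -- the limit principle
  have hlim : ∀ (e A B : ℝ), (∀ s ∈ S, 0 ≤ e * (A - s * B)) → 0 ≤ e * (A - sInf S * B) := by
    intro e A B hall
    have hcl : closure S ⊆ {s : ℝ | 0 ≤ e * (A - s * B)} :=
      closure_minimal hall (isClosed_le continuous_const
        (continuous_const.mul (continuous_const.sub (continuous_id.mul continuous_const))))
    exact hcl (csInf_mem_closure hSne hSbdd)
  refine ⟨fun k => c₀ k + sInf S * d k, ?_, ?_, ?_, ?_⟩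
  · -- interpolation
    intro k
    show (∑ i, (c₀ i + sInf S * d i) * ω i (x k)) = f (x k)
    rw [key, cheb_zero ω x k, hg₀x k]
    ring
  · -- left of x 0
    intro t htI htlt
    show (-1 : ℝ) ^ (m + 1) * (f t - ∑ i, (c₀ i + sInf S * d i) * ω i t) ≤ 0
    have inner : ∀ s ∈ S, 0 ≤ (-1:ℝ)^m *
        ((f t - ∑ k, c₀ k * ω k t) - s * chebV ω (Fin.snoc x t)) := by
      rintro s ⟨y, hyI, hylt, rfl⟩
      have h00 : (Fin.snoc x y : Fin (m+2) → ℝ) 0 = x 0 := by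
        rw [show (0 : Fin (m+2)) = Fin.castSucc (0 : Fin (m+1)) by simp, Fin.snoc_castSucc]
      have H := (hf (Fin.snoc x y) (hsnocI hyI) (strictMono_snoc hmono hylt)
        (fun k => c₀ k + ((f y - ∑ k, c₀ k * ω k y) / chebV ω (Fin.snoc x y)) * d k)
        (hfy y hyI hylt)).1 t htI (by rw [h00]; exact htlt.le)
      rw [key] at H
      have hpow : (-1:ℝ)^(m+1+1) = (-1:ℝ)^m := by rw [pow_succ, pow_succ]; ring
      rw [hpow] at H
      linarith [H]
    have h1 := hlim _ _ _ inner
    rw [key]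
    have hpow : (-1:ℝ)^(m+1) = -(-1:ℝ)^m := by rw [pow_succ]; ring
    rw [hpow, neg_mul, neg_nonpos,
      show f t - ((∑ k, c₀ k * ω k t) + sInf S * chebV ω (Fin.snoc x t))
        = (f t - ∑ k, c₀ k * ω k t) - sInf S * chebV ω (Fin.snoc x t) by ring]
    exact h1
  · -- middle intervals
    intro j t ht1 ht2
    show (-1 : ℝ) ^ (m - (j:ℕ)) * (f t - ∑ i, (c₀ i + sInf S * d i) * ω i t) ≤ 0
    have htI : t ∈ I := hI.out (hxI j.castSucc) (hxI j.succ) ⟨ht1.le, ht2.le⟩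
    have hj : (j:ℕ) ≤ m := j.isLt.le
    have inner : ∀ s ∈ S, 0 ≤ (-(-1:ℝ)^(m-(j:ℕ))) *
        ((f t - ∑ k, c₀ k * ω k t) - s * chebV ω (Fin.snoc x t)) := by
      rintro s ⟨y, hyI, hylt, rfl⟩
      have hc1 : (Fin.snoc x y : Fin (m+2) → ℝ) (Fin.castSucc j.castSucc) = x j.castSucc := by
        rw [Fin.snoc_castSucc]
      have hc2 : (Fin.snoc x y : Fin (m+2) → ℝ) (Fin.succ j.castSucc) = x j.succ := by
        rw [Fin.succ_castSucc, Fin.snoc_castSucc]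
      have H := (hf (Fin.snoc x y) (hsnocI hyI) (strictMono_snoc hmono hylt)
        (fun k => c₀ k + ((f y - ∑ k, c₀ k * ω k y) / chebV ω (Fin.snoc x y)) * d k)
        (hfy y hyI hylt)).2.1 j.castSucc t htI (by rw [hc1]; exact ht1.le)
        (by rw [hc2]; exact ht2.le)
      rw [key] at H
      have hpow : (-1:ℝ)^(m+1+(((j.castSucc : Fin (m+1))):ℕ)+2) = -(-1:ℝ)^(m-(j:ℕ)) := by
        rw [Fin.coe_castSucc]
        rw [show m+1+(j:ℕ)+2 = (m-(j:ℕ)) + (2*(j:ℕ)+3) by omega, pow_add,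
          show ((-1:ℝ))^(2*(j:ℕ)+3) = -1 from Odd.neg_one_pow ⟨(j:ℕ)+1, by ring⟩]
        ring
      rw [hpow] at H
      rw [neg_mul]
      rw [neg_mul] at H
      linarith [H]
    have h1 := hlim _ _ _ inner
    rw [key]
    rw [neg_mul] at h1
    have hre : f t - ((∑ k, c₀ k * ω k t) + sInf S * chebV ω (Fin.snoc x t))
        = (f t - ∑ k, c₀ k * ω k t) - sInf S * chebV ω (Fin.snoc x t) := by ring
    rw [hre]
    linarith
  · -- right of x_m
    intro t htI htlt
    show 0 ≤ f t - ∑ i, (c₀ i + sInf S * d i) * ω i t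
    rw [key]
    have hB := hpos t htI htlt
    have h1 : (f t - ∑ k, c₀ k * ω k t)
        = ((f t - ∑ k, c₀ k * ω k t) / chebV ω (Fin.snoc x t)) * chebV ω (Fin.snoc x t) :=
      (div_mul_cancel₀ _ (ne_of_gt hB)).symm
    have h2 : sInf S ≤ (f t - ∑ k, c₀ k * ω k t) / chebV ω (Fin.snoc x t) :=
      csInf_le hSbdd ⟨t, htI, htlt, rfl⟩
    nlinarith
end

section
/- Let n ≥ 2, let I ⊆ ℝ be an interval, and let ω = (ω₁,…,ωₙ) be a positive Chebyshev system on I such that (ω₁,…,ω_{n−1}) is also a positive Chebyshev system on I. Suppose f : I → ℝ has the property that for all points x₁,…,x_{n−1} in the interior of I with x₁ < ⋯ < x_{n−1} there exist constants c₁,…,cₙ ∈ ℝ such that g = c₁ω₁ + ⋯ + cₙωₙ satisfies g(xₖ) = f(xₖ) for k = 1,…,n−1, (−1)^{n−1}(f(x) − g(x)) ≤ 0 for x ∈ I with x < x₁, (−1)^{n−k}(f(x) − g(x)) ≤ 0 for x_{k−1} < x < xₖ (k = 2,…,n−1), and f(x) − g(x) ≥ 0 for x ∈ I with x > x_{n−1}.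 Then f is ω-n-convex. -/
lemma cheb_key {n : ℕ} (ω : Fin n → ℝ → ℝ) (f : ℝ → ℝ) (c : Fin n → ℝ)
    (y : Fin (n + 1) → ℝ) :
    chebD ω f y = ∑ j : Fin (n + 1),
      (-1 : ℝ) ^ (n + (j : ℕ)) * (f (y j) - ∑ k, c k * ω k (y j)) *
        chebV ω (y ∘ j.succAbove) := by
  classical
  set M : Matrix (Fin (n+1)) (Fin (n+1)) ℝ :=
    Matrix.of (Fin.snoc (fun i j => ω i (y j)) (fun j => f (y j))) with hM
  have hrow : ∀ i : Fin n, ∀ j, M i.castSucc j = ω i (y j) := by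
    intro i j; simp [hM, Matrix.of_apply, Fin.snoc_castSucc]
  have hlast : ∀ j, M (Fin.last n) j = f (y j) := by
    intro j; simp [hM, Matrix.of_apply, Fin.snoc_last]
  set r : Fin (n+1) → ℝ := fun j => f (y j) - ∑ k, c k * ω k (y j) with hr
  set c' : Fin (n+1) → ℝ := Fin.snoc (fun k => -(c k)) 1 with hc'
  have hsum : r = ∑ k, c' k • M k := by
    funext j
    rw [Fin.sum_univ_castSucc]
    simp only [Finset.sum_apply, Pi.add_apply, Pi.smul_apply, smul_eq_mul, hc',
      Fin.snoc_castSucc, Fin.snoc_last, one_mul, hlast, hrow, neg_mul, hr]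
    rw [Finset.sum_neg_distrib]
    ring
  have hdet : (M.updateRow (Fin.last n) r).det = M.det := by
    rw [hsum, Matrix.det_updateRow_sum]
    simp [hc']
  have h0 : chebD ω f y = (M.updateRow (Fin.last n) r).det := by
    rw [hdet]; rfl
  rw [h0, Matrix.det_succ_row _ (Fin.last n)]
  refine Finset.sum_congr rfl fun j _ => ?_
  simp only [Matrix.updateRow_self, Fin.val_last]
  congr 1
  unfold chebV
  congr 1
  ext i j'
  simp only [Matrix.submatrix_apply, Fin.succAbove_last, Matrix.of_apply, Function.comp]
  rw [Matrix.updateRow_ne (Fin.castSucc_lt_last i).ne, hrow]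

lemma strictMono_insertNth' {n : ℕ} (p : Fin (n + 1)) (t : ℝ) (x : Fin n → ℝ)
    (hx : StrictMono x)
    (h1 : ∀ i : Fin n, i.castSucc < p → x i < t)
    (h2 : ∀ i : Fin n, p ≤ i.castSucc → t < x i) :
    StrictMono (p.insertNth t x) := by
  intro a b hab
  rcases eq_or_ne a p with rfl | ha
  · obtain ⟨i, rfl⟩ := Fin.exists_succAbove_eq hab.ne'
    rw [Fin.insertNth_apply_same, Fin.insertNth_apply_succAbove]
    exact h2 i ((Fin.lt_succAbove_iff_le_castSucc _ _).mp hab)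
  · obtain ⟨i, rfl⟩ := Fin.exists_succAbove_eq ha
    rcases eq_or_ne b p with rfl | hb
    · rw [Fin.insertNth_apply_same, Fin.insertNth_apply_succAbove]
      exact h1 i ((Fin.succAbove_lt_iff_castSucc_lt _ _).mp hab)
    · obtain ⟨k, rfl⟩ := Fin.exists_succAbove_eq hb
      rw [Fin.insertNth_apply_succAbove, Fin.insertNth_apply_succAbove]
      exact hx ((Fin.succAbove_lt_succAbove_iff).mp hab)

lemma chebD_nonneg {m : ℕ} (I : Set ℝ) (hI : I.OrdConnected) (ω : Fin (m + 2) → ℝ → ℝ)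
    (hω : IsPosChebyshevOn ω I) (f : ℝ → ℝ)
    (hsupp : ∀ x : Fin (m + 1) → ℝ, (∀ i, x i ∈ interior I) → StrictMono x →
      ∃ c : Fin (m + 2) → ℝ,
        (∀ k, (∑ i, c i * ω i (x k)) = f (x k)) ∧
        (∀ t ∈ I, t < x 0 → (-1 : ℝ) ^ (m + 1) * (f t - ∑ i, c i * ω i t) ≤ 0) ∧
        (∀ t ∈ I, x (Fin.last m) < t → 0 ≤ f t - ∑ i, c i * ω i t))
    (y : Fin (m + 3) → ℝ) (hyI : ∀ i, y i ∈ I) (hy : StrictMono y) :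
    0 ≤ chebD ω f y := by
  set x : Fin (m + 1) → ℝ := fun i => y (i.succ.castSucc) with hx
  have hIcc : Set.Icc (y 0) (y (Fin.last (m + 2))) ⊆ I :=
    hI.out (hyI 0) (hyI (Fin.last (m + 2)))
  have hxint : ∀ i, x i ∈ interior I := by
    intro i
    have h1 : y 0 < x i := by
      apply hy
      simp [Fin.lt_def]
    have h2 : x i < y (Fin.last (m + 2)) := by
      apply hy
      rw [Fin.lt_def]
      simp only [Fin.coe_castSucc, Fin.val_succ, Fin.val_last]
      omega
    have : x i ∈ Set.Ioo (y 0) (y (Fin.last (m + 2))) := ⟨h1, h2⟩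
    rw [← interior_Icc] at this
    exact interior_mono hIcc this
  have hxmono : StrictMono x := by
    intro a b hab
    apply hy
    simp only [Fin.lt_def, Fin.coe_castSucc, Fin.val_succ]
    omega
  obtain ⟨c, hint, hleft, hright⟩ := hsupp x hxint hxmono
  rw [cheb_key ω f c y]
  apply Finset.sum_nonneg
  intro j _
  rcases eq_or_ne j 0 with rfl | hj0
  · have hV : 0 < chebV ω (y ∘ (0 : Fin (m + 3)).succAbove) :=
      hω.2 _ (fun i => hyI _) (hy.comp (Fin.strictMono_succAbove _))
    have hlt : y 0 < x 0 := by
      apply hy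
      rw [Fin.lt_def]
      simp
    have hle := hleft (y 0) (hyI 0) hlt
    have h2 : 0 ≤ (-1 : ℝ) ^ (m + 2 + ((0 : Fin (m + 3)) : ℕ)) *
        (f (y 0) - ∑ i, c i * ω i (y 0)) := by
      rw [show m + 2 + ((0 : Fin (m + 3)) : ℕ) = (m + 1) + 1 from rfl, pow_succ]
      nlinarith
    exact mul_nonneg h2 hV.le
  rcases eq_or_ne j (Fin.last (m + 2)) with rfl | hjl
  · have hV : 0 < chebV ω (y ∘ (Fin.last (m + 2)).succAbove) :=
      hω.2 _ (fun i => hyI _) (hy.comp (Fin.strictMono_succAbove _))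
    have hlt : x (Fin.last m) < y (Fin.last (m + 2)) := by
      apply hy
      rw [Fin.lt_def]
      show ((Fin.last m).succ.castSucc : ℕ) < ((Fin.last (m + 2)) : ℕ)
      simp
    have hge := hright (y (Fin.last (m + 2))) (hyI _) hlt
    have hpow : (-1 : ℝ) ^ (m + 2 + ((Fin.last (m + 2) : Fin (m + 3)) : ℕ)) = 1 := by
      have : ((Fin.last (m + 2) : Fin (m + 3)) : ℕ) = m + 2 := rfl
      rw [this]
      exact Even.neg_one_pow ⟨m + 2, rfl⟩
    rw [hpow, one_mul]
    exact mul_nonneg hge hV.le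
  · have hji : 1 ≤ (j : ℕ) ∧ (j : ℕ) ≤ m + 1 := by
      constructor
      · by_contra h
        apply hj0
        apply Fin.ext
        show (j : ℕ) = ((0 : Fin (m + 3)) : ℕ)
        simp only [Fin.val_zero]
        omega
      · by_contra h
        apply hjl
        apply Fin.ext
        have := j.isLt
        simp only [Fin.val_last]
        omega
    set i : Fin (m + 1) := ⟨(j : ℕ) - 1, by omega⟩ with hi
    have hji' : j = i.succ.castSucc := Fin.ext (by simp [hi]; omega)
    have hzero : f (y j) - ∑ k, c k * ω k (y j) = 0 := by
      rw [hji']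
      have := hint i
      rw [hx] at this
      rw [this]
      ring
    rw [hzero]
    simp

lemma point_sign {m : ℕ} (I : Set ℝ) (hI : I.OrdConnected) (ω : Fin (m + 2) → ℝ → ℝ)
    (hω : IsPosChebyshevOn ω I) (f : ℝ → ℝ)
    (hsupp : ∀ x : Fin (m + 1) → ℝ, (∀ i, x i ∈ interior I) → StrictMono x →
      ∃ c : Fin (m + 2) → ℝ,
        (∀ k, (∑ i, c i * ω i (x k)) = f (x k)) ∧
        (∀ t ∈ I, t < x 0 → (-1 : ℝ) ^ (m + 1) * (f t - ∑ i, c i * ω i t) ≤ 0) ∧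
        (∀ t ∈ I, x (Fin.last m) < t → 0 ≤ f t - ∑ i, c i * ω i t))
    (x : Fin (m + 2) → ℝ) (hxI : ∀ i, x i ∈ I) (hxm : StrictMono x)
    (c : Fin (m + 2) → ℝ) (hc : ∀ i, (∑ k, c k * ω k (x i)) = f (x i))
    (p : Fin (m + 3)) (t : ℝ) (ht : t ∈ I)
    (h1 : ∀ i : Fin (m + 2), i.castSucc < p → x i < t)
    (h2 : ∀ i : Fin (m + 2), p ≤ i.castSucc → t < x i) :
    0 ≤ (-1 : ℝ) ^ (m + 2 + (p : ℕ)) * (f t - ∑ k, c k * ω k t) := by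
  set y : Fin (m + 3) → ℝ := p.insertNth t x with hy
  have hymono : StrictMono y := strictMono_insertNth' p t x hxm h1 h2
  have hyI : ∀ i, y i ∈ I := by
    intro i
    rcases eq_or_ne i p with rfl | h
    · simpa [hy, Fin.insertNth_apply_same] using ht
    · obtain ⟨k, rfl⟩ := Fin.exists_succAbove_eq h
      simpa [hy, Fin.insertNth_apply_succAbove] using hxI k
  have hD := chebD_nonneg I hI ω hω f hsupp y hyI hymono
  rw [cheb_key ω f c y] at hD
  have hsingle : (∑ j : Fin (m + 3),
      (-1 : ℝ) ^ (m + 2 + (j : ℕ)) * (f (y j) - ∑ k, c k * ω k (y j)) *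
        chebV ω (y ∘ j.succAbove)) =
      (-1 : ℝ) ^ (m + 2 + (p : ℕ)) * (f (y p) - ∑ k, c k * ω k (y p)) *
        chebV ω (y ∘ p.succAbove) := by
    apply Finset.sum_eq_single
    · intro b _ hb
      obtain ⟨k, rfl⟩ := Fin.exists_succAbove_eq hb
      have hyk : y (p.succAbove k) = x k := by rw [hy]; simp
      rw [hyk, hc k]
      simp
    · intro h
      exact absurd (Finset.mem_univ p) h
  rw [hsingle] at hD
  have hyp : y p = t := by rw [hy]; simp
  have hyx : y ∘ p.succAbove = x := by funext k; simp [hy]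
  rw [hyp, hyx] at hD
  have hV : 0 < chebV ω x := hω.2 x hxI hxm
  have h := div_nonneg hD hV.le
  rwa [mul_div_assoc, div_self hV.ne', mul_one] at h

/-- **Theorem 3, sufficiency.** If for all `x₁ < ⋯ < x_{n−1}` in the interior of `I` there is
`g = c₁ω₁ + ⋯ + cₙωₙ` interpolating `f` at `x₁,…,x_{n−1}` with `(−1)^{n−1}(f−g) ≤ 0` left of
`x₁`, `(−1)^{n−k}(f−g) ≤ 0` on `(x_{k−1},x_k)` for `k = 2,…,n−1`, and `f − g ≥ 0` right of
`x_{n−1}`, then `f` is `ω`-`n`-convex (`n = m+2`). -/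
theorem isConvexOmega_support_sufficiency {m : ℕ} (I : Set ℝ) (hI : I.OrdConnected)
    (ω : Fin (m + 2) → ℝ → ℝ)
    (hω : IsPosChebyshevOn ω I)
    (hω' : IsPosChebyshevOn (fun i : Fin (m + 1) => ω i.castSucc) I)
    (f : ℝ → ℝ)
    (hsupp : ∀ x : Fin (m + 1) → ℝ, (∀ i, x i ∈ interior I) → StrictMono x →
      ∃ c : Fin (m + 2) → ℝ,
        (∀ k, (∑ i, c i * ω i (x k)) = f (x k)) ∧
        (∀ t ∈ I, t < x 0 → (-1 : ℝ) ^ (m + 1) * (f t - ∑ i, c i * ω i t) ≤ 0) ∧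
        (∀ j : Fin m, ∀ t : ℝ, x j.castSucc < t → t < x j.succ →
          (-1 : ℝ) ^ (m - (j : ℕ)) * (f t - ∑ i, c i * ω i t) ≤ 0) ∧
        (∀ t ∈ I, x (Fin.last m) < t → 0 ≤ f t - ∑ i, c i * ω i t)) :
    IsConvexOmega ω I f := by
  have hsupp' : ∀ x : Fin (m + 1) → ℝ, (∀ i, x i ∈ interior I) → StrictMono x →
      ∃ c : Fin (m + 2) → ℝ,
        (∀ k, (∑ i, c i * ω i (x k)) = f (x k)) ∧
        (∀ t ∈ I, t < x 0 → (-1 : ℝ) ^ (m + 1) * (f t - ∑ i, c i * ω i t) ≤ 0) ∧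
        (∀ t ∈ I, x (Fin.last m) < t → 0 ≤ f t - ∑ i, c i * ω i t) := by
    intro x hx hm
    obtain ⟨c, h1, h2, _, h4⟩ := hsupp x hx hm
    exact ⟨c, h1, h2, h4⟩
  intro x hxI hxm c hc
  refine ⟨?_, ?_, ?_⟩
  · intro t ht hle
    rcases eq_or_lt_of_le hle with heq | hlt
    · rw [heq, hc 0]
      simp
    · have key := point_sign I hI ω hω f hsupp' x hxI hxm c hc 0 t ht
        (fun i hi => absurd hi (Fin.not_lt_zero _))
        (fun i _ => hlt.trans_le (hxm.monotone (Fin.zero_le i)))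
      have e : m + 2 + ((0 : Fin (m + 3)) : ℕ) = m + 1 + 1 := rfl
      rwa [e] at key
  · intro j t ht hle1 hle2
    rcases eq_or_lt_of_le hle1 with heq | hlt1
    · rw [← heq, hc j.castSucc]
      simp
    rcases eq_or_lt_of_le hle2 with heq | hlt2
    · rw [heq, hc j.succ]
      simp
    · set p : Fin (m + 3) := j.succ.castSucc with hp
      have h1 : ∀ i : Fin (m + 2), i.castSucc < p → x i < t := by
        intro i hi
        rw [Fin.lt_def] at hi
        simp only [hp, Fin.coe_castSucc, Fin.val_succ] at hi
        have : i ≤ j.castSucc := by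
          rw [Fin.le_def]
          simp only [Fin.coe_castSucc]
          omega
        exact lt_of_le_of_lt (hxm.monotone this) hlt1
      have h2 : ∀ i : Fin (m + 2), p ≤ i.castSucc → t < x i := by
        intro i hi
        rw [Fin.le_def] at hi
        simp only [hp, Fin.coe_castSucc, Fin.val_succ] at hi
        have : j.succ ≤ i := by
          rw [Fin.le_def]
          simp only [Fin.val_succ]
          omega
        exact lt_of_lt_of_le hlt2 (hxm.monotone this)
      have key := point_sign I hI ω hω f hsupp' x hxI hxm c hc p t ht h1 h2
      have e : m + 2 + (p : ℕ) = m + 1 + (j : ℕ) + 2 := by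
        simp only [hp, Fin.coe_castSucc, Fin.val_succ]
        omega
      rwa [e] at key
  · intro t ht hle
    rcases eq_or_lt_of_le hle with heq | hlt
    · rw [← heq, hc (Fin.last (m + 1))]
      simp
    · have h1 : ∀ i : Fin (m + 2), i.castSucc < Fin.last (m + 2) → x i < t :=
        fun i _ => lt_of_le_of_lt (hxm.monotone (Fin.le_last i)) hlt
      have h2 : ∀ i : Fin (m + 2), Fin.last (m + 2) ≤ i.castSucc → t < x i := by
        intro i hi
        rw [Fin.le_def] at hi
        simp only [Fin.val_last, Fin.coe_castSucc] at hi
        have := i.isLt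
        omega
      have key := point_sign I hI ω hω f hsupp' x hxI hxm c hc (Fin.last (m + 2)) t ht h1 h2
      have e : (-1 : ℝ) ^ (m + 2 + ((Fin.last (m + 2) : Fin (m + 3)) : ℕ)) = 1 := by
        have : ((Fin.last (m + 2) : Fin (m + 3)) : ℕ) = m + 2 := rfl
        rw [this]
        exact Even.neg_one_pow ⟨m + 2, rfl⟩
      rwa [e, one_mul] at key
end

section
/- Let I ⊆ ℝ be an interval and let ω = (ω₁,ω₂) be a positive Chebyshev system on I such that ω₁ > 0 on I. A function f : I → ℝ is ω-2-convex if and only if for every x₁ in the interior of I there exist constants c₁, c₂ ∈ ℝ such that the function g = c₁ω₁ + c₂ω₂ satisfies g(x₁) = f(x₁) and g ≤ f on I. -/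
private lemma strictMono_pair {u v : ℝ} (h : u < v) : StrictMono ![u, v] := by
  intro i j hij
  fin_cases i <;> fin_cases j <;> simp_all [Fin.lt_def]

private lemma det_pair (ω₁ ω₂ : ℝ → ℝ) (u v : ℝ) :
    chebV ![ω₁, ω₂] ![u, v] = ω₁ u * ω₂ v - ω₂ u * ω₁ v := by
  simp [chebV, Matrix.det_fin_two]; ring

private lemma phi_lt {I : Set ℝ} {ω₁ ω₂ : ℝ → ℝ} (hω : IsPosChebyshevOn ![ω₁, ω₂] I)
    (hpos : ∀ t ∈ I, 0 < ω₁ t) {u v : ℝ} (hu : u ∈ I) (hv : v ∈ I) (huv : u < v) :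
    ω₂ u / ω₁ u < ω₂ v / ω₁ v := by
  have h := hω.2 ![u, v] (by intro i; fin_cases i <;> simpa) (strictMono_pair huv)
  rw [det_pair] at h
  rw [div_lt_div_iff₀ (hpos u hu) (hpos v hv)]
  nlinarith

private lemma line_le_iff {ω₁v ω₂v fv c₁ c₂ : ℝ} (h : 0 < ω₁v) :
    c₁ * ω₁v + c₂ * ω₂v ≤ fv ↔ c₁ + c₂ * (ω₂v / ω₁v) ≤ fv / ω₁v := by
  have e : (c₁ + c₂ * (ω₂v / ω₁v)) * ω₁v = c₁ * ω₁v + c₂ * ω₂v := by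
    field_simp
  rw [le_div_iff₀ h, e]

private lemma line_eq_iff {ω₁v ω₂v fv c₁ c₂ : ℝ} (h : 0 < ω₁v) :
    c₁ * ω₁v + c₂ * ω₂v = fv ↔ c₁ + c₂ * (ω₂v / ω₁v) = fv / ω₁v := by
  have e : (c₁ + c₂ * (ω₂v / ω₁v)) * ω₁v = c₁ * ω₁v + c₂ * ω₂v := by
    field_simp
  rw [eq_div_iff (ne_of_gt h), e]

private lemma line_ge_iff {ω₁v ω₂v fv c₁ c₂ : ℝ} (h : 0 < ω₁v) :
    fv ≤ c₁ * ω₁v + c₂ * ω₂v ↔ fv / ω₁v ≤ c₁ + c₂ * (ω₂v / ω₁v) := by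
  have e : (c₁ + c₂ * (ω₂v / ω₁v)) * ω₁v = c₁ * ω₁v + c₂ * ω₂v := by
    field_simp
  rw [div_le_iff₀ h, e]

private lemma slope_arith {pu pv pw Fu Fv Fw : ℝ} (h1 : pu < pv) (h2 : pv < pw)
    (h : Fv ≤ Fu + (Fw - Fu) / (pw - pu) * (pv - pu)) :
    (Fu - Fv) / (pu - pv) ≤ (Fw - Fv) / (pw - pv) := by
  have e : (Fu - Fv) / (pu - pv) = (Fv - Fu) / (pv - pu) := by
    rw [← neg_sub Fv Fu, ← neg_sub pv pu, neg_div_neg_eq]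
  rw [e, div_le_div_iff₀ (by linarith) (by linarith)]
  set m := (Fw - Fu) / (pw - pu) with hm
  have hmc : m * (pw - pu) = Fw - Fu := div_mul_cancel₀ _ (by linarith : pw - pu ≠ (0:ℝ))
  nlinarith [mul_le_mul_of_nonneg_right h (by linarith : (0:ℝ) ≤ pw - pv)]

/-- Slope comparison derived from ω-2-convexity: for `u < v < w` in `I`,
the slope (in φ-coordinates, relative to `v`) at `u` is ≤ the one at `w`. -/
private lemma slope_le {I : Set ℝ} {ω₁ ω₂ f : ℝ → ℝ}
    (hω : IsPosChebyshevOn ![ω₁, ω₂] I) (hpos : ∀ t ∈ I, 0 < ω₁ t)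
    (hconv : IsConvexOmega ![ω₁, ω₂] I f)
    {u v w : ℝ} (hu : u ∈ I) (hv : v ∈ I) (hw : w ∈ I) (huv : u < v) (hvw : v < w) :
    (f u / ω₁ u - f v / ω₁ v) / (ω₂ u / ω₁ u - ω₂ v / ω₁ v) ≤
      (f w / ω₁ w - f v / ω₁ v) / (ω₂ w / ω₁ w - ω₂ v / ω₁ v) := by
  set pu := ω₂ u / ω₁ u with hpu
  set pv := ω₂ v / ω₁ v with hpv
  set pw := ω₂ w / ω₁ w with hpw
  set Fu := f u / ω₁ u with hFu
  set Fv := f v / ω₁ v with hFv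
  set Fw := f w / ω₁ w with hFw
  have h1 : pu < pv := phi_lt hω hpos hu hv huv
  have h2 : pv < pw := phi_lt hω hpos hv hw hvw
  have h3 : pu < pw := h1.trans h2
  set c₂ := (Fw - Fu) / (pw - pu) with hc₂
  set c₁ := Fu - c₂ * pu with hc₁
  have hcu : c₁ + c₂ * pu = Fu := by rw [hc₁]; ring
  have hcw : c₁ + c₂ * pw = Fw := by
    have := div_mul_cancel₀ (Fw - Fu) (by linarith : pw - pu ≠ (0:ℝ))
    rw [hc₁, hc₂]
    linear_combination this
  have hint : ∀ i, (∑ k, (![c₁, c₂] : Fin 2 → ℝ) k * (![ω₁, ω₂] : Fin 2 → ℝ → ℝ) k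
      ((![u, w] : Fin 2 → ℝ) i)) = f ((![u, w] : Fin 2 → ℝ) i) := by
    intro i
    fin_cases i
    · simpa [Fin.sum_univ_two] using (line_eq_iff (hpos u hu)).2 hcu
    · simpa [Fin.sum_univ_two] using (line_eq_iff (hpos w hw)).2 hcw
  obtain ⟨-, hmid, -⟩ := hconv ![u, w]
    (by intro i; fin_cases i <;> simpa) (strictMono_pair (huv.trans hvw)) ![c₁, c₂] hint
  have hmv := hmid 0 v hv (by simpa using le_of_lt huv) (by simpa using le_of_lt hvw)
  have hfv : f v ≤ c₁ * ω₁ v + c₂ * ω₂ v := by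
    norm_num at hmv
    simpa using hmv
  have hFvle : Fv ≤ c₁ + c₂ * pv := (line_ge_iff (hpos v hv)).1 hfv
  have h : Fv ≤ Fu + (Fw - Fu) / (pw - pu) * (pv - pu) := by
    rw [← hc₂]
    have := hcu
    nlinarith [hFvle]
  exact slope_arith h1 h2 h


/-- **Corollary 2.** For a positive Chebyshev system `(ω₁, ω₂)` with `ω₁ > 0` on `I`,
`f` is `ω`-2-convex iff for every `x₁` in the interior of `I` there are constants `c₁, c₂`
with `c₁ω₁(x₁) + c₂ω₂(x₁) = f(x₁)` and `c₁ω₁ + c₂ω₂ ≤ f` on `I`. -/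
theorem isConvexOmega_two_iff_support (I : Set ℝ) (hI : I.OrdConnected)
    (ω₁ ω₂ : ℝ → ℝ)
    (hω : IsPosChebyshevOn ![ω₁, ω₂] I)
    (hpos : ∀ t ∈ I, 0 < ω₁ t)
    (f : ℝ → ℝ) :
    IsConvexOmega ![ω₁, ω₂] I f ↔
      ∀ x₁ ∈ interior I, ∃ c₁ c₂ : ℝ,
        c₁ * ω₁ x₁ + c₂ * ω₂ x₁ = f x₁ ∧ ∀ t ∈ I, c₁ * ω₁ t + c₂ * ω₂ t ≤ f t := by
  set p : ℝ → ℝ := fun t => ω₂ t / ω₁ t with hp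
  set F : ℝ → ℝ := fun t => f t / ω₁ t with hF
  have hIoo : ∀ a ∈ I, ∀ b ∈ I, Set.Ioo a b ⊆ I := fun a ha b hb t ht =>
    hI.out ha hb ⟨le_of_lt ht.1, le_of_lt ht.2⟩
  constructor
  · -- forward direction
    intro hconv x₁ hx₁
    have hx₁I : x₁ ∈ I := interior_subset hx₁
    obtain ⟨ε, hε, hball⟩ := Metric.mem_nhds_iff.1 (mem_interior_iff_mem_nhds.1 hx₁)
    have ha : x₁ - ε/2 ∈ I := hball (by
      simp only [Metric.mem_ball, Real.dist_eq, abs_lt]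
      constructor <;> linarith)
    have hb : x₁ + ε/2 ∈ I := hball (by
      simp only [Metric.mem_ball, Real.dist_eq, abs_lt]
      constructor <;> linarith)
    have halt : x₁ - ε/2 < x₁ := by linarith
    have hblt : x₁ < x₁ + ε/2 := by linarith
    set sl : ℝ → ℝ := fun t => (F t - F x₁) / (p t - p x₁) with hsl
    set LS := sl '' {u | u ∈ I ∧ u < x₁} with hLS
    have hneLS : LS.Nonempty := ⟨sl (x₁ - ε/2), ⟨x₁ - ε/2, ⟨ha, halt⟩, rfl⟩⟩
    have hbdd : BddAbove LS := ⟨sl (x₁ + ε/2), by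
      rintro s ⟨u2, ⟨hu2, hlt⟩, rfl⟩
      exact slope_le hω hpos hconv hu2 hx₁I hb hlt hblt⟩
    set c₂ := sSup LS with hc₂
    have key : ∀ t ∈ I, F x₁ + c₂ * (p t - p x₁) ≤ F t := by
      intro t ht
      rcases lt_trichotomy t x₁ with h | h | h
      · have hle : sl t ≤ c₂ := le_csSup hbdd ⟨t, ⟨ht, h⟩, rfl⟩
        have hplt : p t < p x₁ := phi_lt hω hpos ht hx₁I h
        have hcan : sl t * (p t - p x₁) = F t - F x₁ :=
          div_mul_cancel₀ _ (by linarith : p t - p x₁ ≠ 0)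
        nlinarith [mul_le_mul_of_nonpos_right hle (by linarith : p t - p x₁ ≤ 0)]
      · subst h; simp
      · have hge : c₂ ≤ sl t := csSup_le hneLS (by
          rintro s ⟨u2, ⟨hu2, hlt⟩, rfl⟩
          exact slope_le hω hpos hconv hu2 hx₁I ht hlt h)
        have hplt : p x₁ < p t := phi_lt hω hpos hx₁I ht h
        have hcan : sl t * (p t - p x₁) = F t - F x₁ :=
          div_mul_cancel₀ _ (by linarith : p t - p x₁ ≠ 0)
        nlinarith [mul_le_mul_of_nonneg_right hge (by linarith : (0:ℝ) ≤ p t - p x₁)]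
    refine ⟨F x₁ - c₂ * p x₁, c₂, ?_, ?_⟩
    · refine (line_eq_iff (hpos x₁ hx₁I)).2 ?_
      show F x₁ - c₂ * p x₁ + c₂ * (ω₂ x₁ / ω₁ x₁) = f x₁ / ω₁ x₁
      simp only [hp, hF]; ring
    · intro t ht
      refine (line_le_iff (hpos t ht)).2 ?_
      have h := key t ht
      have e1 : F x₁ + c₂ * (p t - p x₁) = (F x₁ - c₂ * p x₁) + c₂ * (ω₂ t / ω₁ t) := by
        simp only [hp]; ring
      have e2 : F t = f t / ω₁ t := by simp only [hF]
      rw [e1, e2] at h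
      exact h
  · -- backward direction
    intro hsupp x hmem hmono c hc
    have hx01 : x 0 < x 1 := hmono (by decide)
    have hsum : ∀ t, (∑ k, c k * (![ω₁, ω₂] : Fin 2 → ℝ → ℝ) k t)
        = c 0 * ω₁ t + c 1 * ω₂ t := fun t => by simp [Fin.sum_univ_two]
    have hc0 : c 0 * ω₁ (x 0) + c 1 * ω₂ (x 0) = f (x 0) := by rw [← hsum]; exact hc 0
    have hc1 : c 0 * ω₁ (x 1) + c 1 * ω₂ (x 1) = f (x 1) := by rw [← hsum]; exact hc 1
    have hL0 : c 0 + c 1 * p (x 0) = F (x 0) := (line_eq_iff (hpos _ (hmem 0))).1 hc0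
    have hL1 : c 0 + c 1 * p (x 1) = F (x 1) := (line_eq_iff (hpos _ (hmem 1))).1 hc1
    have hsup : ∀ s, s ∈ interior I → ∃ d₁ d₂ : ℝ,
        (d₁ + d₂ * p s = F s) ∧ ∀ t ∈ I, d₁ + d₂ * p t ≤ F t := by
      intro s hs
      obtain ⟨d₁, d₂, he, hle⟩ := hsupp s hs
      exact ⟨d₁, d₂, (line_eq_iff (hpos s (interior_subset hs))).1 he,
        fun t ht => (line_le_iff (hpos t ht)).1 (hle t ht)⟩
    have hp01 : p (x 0) < p (x 1) := phi_lt hω hpos (hmem 0) (hmem 1) hx01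
    refine ⟨?_, ?_, ?_⟩
    · -- left region: t ≤ x 0
      intro t ht hle
      rw [hsum t]
      have main : c 0 * ω₁ t + c 1 * ω₂ t ≤ f t := by
        rcases eq_or_lt_of_le hle with h | h
        · subst h; exact le_of_eq hc0
        · have hx0int : x 0 ∈ interior I :=
            interior_maximal (hIoo t ht (x 1) (hmem 1)) isOpen_Ioo ⟨h, hx01⟩
          obtain ⟨d₁, d₂, he, hdle⟩ := hsup (x 0) hx0int
          have he0 : d₁ + d₂ * p (x 0) = c 0 + c 1 * p (x 0) := by rw [he, hL0]
          have hm1 : d₁ + d₂ * p (x 1) ≤ c 0 + c 1 * p (x 1) := by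
            rw [hL1]; exact hdle _ (hmem 1)
          have hmt : d₁ + d₂ * p t ≤ F t := hdle t ht
          have hpt0 : p t < p (x 0) := phi_lt hω hpos ht (hmem 0) h
          have hB : 0 ≤ c 1 - d₂ := by
            by_contra hB'
            push_neg at hB'
            nlinarith
          have hFt : c 0 + c 1 * p t ≤ F t := by
            nlinarith [mul_nonneg hB (by linarith : (0:ℝ) ≤ p (x 0) - p t)]
          exact (line_le_iff (hpos t ht)).2 hFt
      norm_num
      linarith
    · -- middle region
      intro j t ht h0 h1
      fin_cases j
      have h0' : x 0 ≤ t := by simpa using h0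
      have h1' : t ≤ x 1 := by simpa using h1
      rw [hsum t]
      have main : f t ≤ c 0 * ω₁ t + c 1 * ω₂ t := by
        rcases eq_or_lt_of_le h0' with h | h
        · subst h; exact le_of_eq hc0.symm
        rcases eq_or_lt_of_le h1' with h' | h'
        · subst h'; exact le_of_eq hc1.symm
        · have htint : t ∈ interior I :=
            interior_maximal (hIoo (x 0) (hmem 0) (x 1) (hmem 1)) isOpen_Ioo ⟨h, h'⟩
          obtain ⟨d₁, d₂, he, hdle⟩ := hsup t htint
          have hm0 : d₁ + d₂ * p (x 0) ≤ c 0 + c 1 * p (x 0) := by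
            rw [hL0]; exact hdle _ (hmem 0)
          have hm1 : d₁ + d₂ * p (x 1) ≤ c 0 + c 1 * p (x 1) := by
            rw [hL1]; exact hdle _ (hmem 1)
          have hp0t : p (x 0) < p t := phi_lt hω hpos (hmem 0) ht h
          have hpt1 : p t < p (x 1) := phi_lt hω hpos ht (hmem 1) h'
          have hFt : F t ≤ c 0 + c 1 * p t := by
            rw [← he]
            rcases le_or_gt 0 (c 1 - d₂) with hB | hB
            · nlinarith [mul_le_mul_of_nonneg_left (le_of_lt hp0t) hB]
            · nlinarith [mul_le_mul_of_nonpos_left (le_of_lt hpt1) (le_of_lt hB)]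
          exact (line_ge_iff (hpos t ht)).2 hFt
      norm_num
      linarith
    · -- right region: x 1 ≤ t
      intro t ht hle
      have hle' : x 1 ≤ t := by simpa using hle
      rw [hsum t]
      have main : c 0 * ω₁ t + c 1 * ω₂ t ≤ f t := by
        rcases eq_or_lt_of_le hle' with h | h
        · rw [← h]; exact le_of_eq hc1
        · have hx1int : x 1 ∈ interior I :=
            interior_maximal (hIoo (x 0) (hmem 0) t ht) isOpen_Ioo ⟨hx01, h⟩
          obtain ⟨d₁, d₂, he, hdle⟩ := hsup (x 1) hx1int
          have he1 : d₁ + d₂ * p (x 1) = c 0 + c 1 * p (x 1) := by rw [he, hL1]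
          have hm0 : d₁ + d₂ * p (x 0) ≤ c 0 + c 1 * p (x 0) := by
            rw [hL0]; exact hdle _ (hmem 0)
          have hmt : d₁ + d₂ * p t ≤ F t := hdle t ht
          have hpt1 : p (x 1) < p t := phi_lt hω hpos (hmem 1) ht h
          have hB : c 1 - d₂ ≤ 0 := by
            by_contra hB'
            push_neg at hB'
            nlinarith
          have hFt : c 0 + c 1 * p t ≤ F t := by
            nlinarith [mul_nonpos_of_nonpos_of_nonneg hB (by linarith : (0:ℝ) ≤ p t - p (x 1))]
          exact (line_le_iff (hpos t ht)).2 hFt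
      linarith
end
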